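/- For a k-outcome POVM A on ℂ^d, the noise content equals the sum of the smallest eigenvalues of the effects: w(A) = Σ_{i=1}^k λ_min(A_i), where w(A) is the supremum of t ∈ [0,1] such that A = tT + (1-t)B for some trivial POVM T (T_i = p_i I for a probability vector p) and some POVM B with the same outcome set. -/

import Mathlib

open Matrix BigOperators
open scoped ComplexOrder

/-!
Splitting `t p_i I` off `A_i` leaves a positive semidefinite remainder exactly when
`t p_i ≤ λ_min(A_i)`, and since the effects sum to `I` the remainders sum to `(1 - t) I`, so after
rescaling by `(1 - t)⁻¹` they form a POVM. Hence `w(A)` is the largest `t ∈ [0, 1]` with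
`t p ≤ λ_min(A)` for some probability vector `p`, namely `∑ λ_min(A_i)`, attained at `p ∝ λ_min(A)`;
the sum is at most `1` because `∑ (A_i - λ_min(A_i) I) = (1 - ∑ λ_min(A_i)) I ⪰ 0`.
-/

/-- Minimal eigenvalue of a (Hermitian) matrix; junk value 0 otherwise. -/
noncomputable def minEig {d : ℕ} (M : Matrix (Fin d) (Fin d) ℂ) : ℝ :=
  if h : M.IsHermitian then ⨅ j, h.eigenvalues j else 0

namespace Matrix

variable {n 𝕜 : Type*} [RCLike 𝕜] {M : Matrix n n 𝕜}

open scoped MatrixOrder in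
theorem IsHermitian.posSemidef_sub_smul_one_iff [Fintype n] [DecidableEq n] (hM : M.IsHermitian)
    (c : ℝ) :
    (M - (c : 𝕜) • 1).PosSemidef ↔ ∀ j, c ≤ hM.eigenvalues j := by
  have h := algebraMap_le_iff_le_spectrum (R := ℝ) (r := c) hM.isSelfAdjoint
  rwa [hM.spectrum_real_eq_range_eigenvalues, Set.forall_mem_range, Algebra.algebraMap_eq_smul_one,
    RCLike.real_smul_eq_coe_smul (K := 𝕜)] at h

open scoped MatrixOrder in
theorem PosSemidef.eq_zero_of_sum_eq_zero {ι : Type*} {A : ι → Matrix n n 𝕜} {s : Finset ι}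
    (hA : ∀ i ∈ s, (A i).PosSemidef) (hsum : ∑ i ∈ s, A i = 0) {i : ι} (hi : i ∈ s) : A i = 0 :=
  (Finset.sum_eq_zero_iff_of_nonneg fun i hi => (hA i hi).nonneg).mp hsum i hi

theorem PosSemidef.nonneg_of_smul_one [DecidableEq n] [Nonempty n] {c : ℝ}
    (h : ((c : 𝕜) • (1 : Matrix n n 𝕜)).PosSemidef) : 0 ≤ c := by
  obtain ⟨j⟩ := ‹Nonempty n›
  simpa using h.diag_nonneg (i := j)

end Matrix

section minEig

variable {d : ℕ} {M : Matrix (Fin d) (Fin d) ℂ}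

theorem le_minEig_iff [NeZero d] (hM : M.IsHermitian) {c : ℝ} :
    c ≤ minEig M ↔ (M - (c : ℂ) • 1).PosSemidef := by
  rw [minEig, dif_pos hM, le_ciInf_iff (Set.finite_range _).bddBelow]
  exact (hM.posSemidef_sub_smul_one_iff c).symm

theorem Matrix.IsHermitian.posSemidef_sub_minEig_smul_one [NeZero d] (hM : M.IsHermitian) :
    (M - (minEig M : ℂ) • 1).PosSemidef :=
  (le_minEig_iff hM).mp le_rfl

theorem Matrix.PosSemidef.minEig_nonneg [NeZero d] (hM : M.PosSemidef) : 0 ≤ minEig M :=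
  (le_minEig_iff hM.isHermitian).mpr (by simpa using hM)

end minEig

theorem isGreatest_sum_of_exists_stdSimplex_mul_le {ι : Type*} [Fintype ι] [Nonempty ι]
    {l : ι → ℝ} (hl : ∀ i, 0 ≤ l i) (hl1 : ∑ i, l i ≤ 1) :
    IsGreatest {t | t ∈ Set.Icc (0 : ℝ) 1 ∧ ∃ p ∈ stdSimplex ℝ ι, ∀ i, t * p i ≤ l i}
      (∑ i, l i) := by
  classical
  set w := ∑ i, l i
  have hw : 0 ≤ w := Finset.sum_nonneg fun i _ => hl i
  refine ⟨⟨⟨hw, hl1⟩, ?_⟩, ?_⟩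
  · rcases hw.eq_or_lt with hw0 | hwpos
    · exact ⟨_, single_mem_stdSimplex ℝ (Classical.arbitrary ι), fun i => by simp [← hw0, hl i]⟩
    · refine ⟨fun i => l i / w, ⟨fun i => div_nonneg (hl i) hw, ?_⟩, fun i => ?_⟩
      · rw [← Finset.sum_div, div_self hwpos.ne']
      · rw [mul_div_cancel₀ _ hwpos.ne']
  · rintro t ⟨-, p, ⟨-, hp1⟩, htp⟩
    calc t = ∑ i, t * p i := by rw [← Finset.mul_sum, hp1, mul_one]
      _ ≤ w := Finset.sum_le_sum fun i _ => htp i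

/-- The weights `t` of trivial POVMs in decompositions `A = t T + (1 - t) B`; the noise content
`w(A)` is their supremum. -/
noncomputable def noiseWeights {ι : Type*} [Fintype ι] {d : ℕ}
    (A : ι → Matrix (Fin d) (Fin d) ℂ) : Set ℝ :=
  {t : ℝ | t ∈ Set.Icc (0:ℝ) 1 ∧
        ∃ p : ι → ℝ, (∀ i, 0 ≤ p i) ∧ (∑ i, p i = 1) ∧
        ∃ B : ι → Matrix (Fin d) (Fin d) ℂ,
          (∀ i, (B i).PosSemidef) ∧ (∑ i, B i = 1) ∧
          (∀ i, A i = (t : ℂ) • ((p i : ℂ) • (1 : Matrix (Fin d) (Fin d) ℂ))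
                        + ((1 - t : ℝ) : ℂ) • B i)}

section noiseWeights

variable {ι : Type*} [Fintype ι] {d : ℕ} {A : ι → Matrix (Fin d) (Fin d) ℂ}

theorem sum_sub_smul_one (hAsum : ∑ i, A i = 1) (c : ι → ℝ) :
    ∑ i, (A i - (c i : ℂ) • 1) = ((1 - ∑ i, c i : ℝ) : ℂ) • 1 := by
  rw [Finset.sum_sub_distrib, hAsum, ← Finset.sum_smul, Complex.ofReal_sub, Complex.ofReal_one,
    Complex.ofReal_sum, sub_smul, one_smul]

theorem sum_minEig_le_one [NeZero d] (hA : ∀ i, (A i).IsHermitian) (hAsum : ∑ i, A i = 1) :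
    ∑ i, minEig (A i) ≤ 1 := by
  have h := posSemidef_sum Finset.univ fun i _ => (hA i).posSemidef_sub_minEig_smul_one
  rw [sum_sub_smul_one hAsum] at h
  exact sub_nonneg.mp h.nonneg_of_smul_one

theorem mem_noiseWeights_of_posSemidef (hAsum : ∑ i, A i = 1) {t : ℝ} (ht : t ∈ Set.Icc 0 1)
    {p : ι → ℝ} (hp : p ∈ stdSimplex ℝ ι)
    (hC : ∀ i, (A i - ((t * p i : ℝ) : ℂ) • 1).PosSemidef) : t ∈ noiseWeights A := by
  obtain ⟨hp0, hp1⟩ := hp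
  have hCsum : ∑ i, (A i - ((t * p i : ℝ) : ℂ) • 1) = ((1 - t : ℝ) : ℂ) • 1 := by
    rw [sum_sub_smul_one hAsum, ← Finset.mul_sum, hp1, mul_one]
  have hsplit i : A i = (t : ℂ) • ((p i : ℂ) • 1) + (A i - ((t * p i : ℝ) : ℂ) • 1) := by
    rw [smul_smul, ← Complex.ofReal_mul, add_sub_cancel]
  refine ⟨ht, p, hp0, hp1, ?_⟩
  rcases ht.2.lt_or_eq with ht1 | rfl
  · have hpos : 0 < 1 - t := sub_pos.mpr ht1
    refine ⟨fun i => (((1 - t)⁻¹ : ℝ) : ℂ) • (A i - ((t * p i : ℝ) : ℂ) • 1),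
      fun i => (hC i).smul (Complex.zero_le_real.mpr (inv_nonneg.mpr hpos.le)), ?_, fun i => ?_⟩
    · rw [← Finset.smul_sum, hCsum, smul_smul, ← Complex.ofReal_mul, inv_mul_cancel₀ hpos.ne',
        Complex.ofReal_one, one_smul]
    · rw [smul_smul ((1 - t : ℝ) : ℂ), ← Complex.ofReal_mul, mul_inv_cancel₀ hpos.ne',
        Complex.ofReal_one, one_smul]
      exact hsplit i
  · -- at `t = 1` the remainders are positive semidefinite with zero sum, hence zero
    have hC0 i := PosSemidef.eq_zero_of_sum_eq_zero (fun i _ => hC i)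
      (by rw [hCsum, sub_self, Complex.ofReal_zero, zero_smul]) (Finset.mem_univ i)
    refine ⟨fun i => (p i : ℂ) • 1, fun i => PosSemidef.one.smul (Complex.zero_le_real.mpr (hp0 i)),
      ?_, fun i => ?_⟩
    · rw [← Finset.sum_smul, ← Complex.ofReal_sum, hp1, Complex.ofReal_one, one_smul]
    · rw [sub_self, Complex.ofReal_zero, zero_smul, add_zero, hsplit i, hC0 i, add_zero]

theorem mem_noiseWeights_iff [NeZero d] (hA : ∀ i, (A i).IsHermitian) (hAsum : ∑ i, A i = 1)
    {t : ℝ} : t ∈ noiseWeights A ↔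
      t ∈ Set.Icc 0 1 ∧ ∃ p ∈ stdSimplex ℝ ι, ∀ i, t * p i ≤ minEig (A i) := by
  constructor
  · rintro ⟨ht, p, hp0, hp1, B, hB, -, hAB⟩
    refine ⟨ht, p, ⟨hp0, hp1⟩, fun i => (le_minEig_iff (hA i)).mpr ?_⟩
    rw [hAB i, smul_smul, ← Complex.ofReal_mul, add_sub_cancel_left]
    exact (hB i).smul (Complex.zero_le_real.mpr (sub_nonneg.mpr ht.2))
  · rintro ⟨ht, p, hp, htp⟩
    exact mem_noiseWeights_of_posSemidef hAsum ht hp fun i => (le_minEig_iff (hA i)).mp (htp i)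

end noiseWeights

/-- The noise content of a POVM (the supremum of the weights `t` of trivial POVMs
in effect-wise convex decompositions `A = tT + (1-t)B`) equals the sum of the minimal
eigenvalues of the effects. -/
theorem noiseContent_eq_sum_minEig {d k : ℕ} (hd : 0 < d)
    (A : Fin k → Matrix (Fin d) (Fin d) ℂ)
    (hA : ∀ i, (A i).PosSemidef) (hAsum : ∑ i, A i = 1) :
    sSup {t : ℝ | t ∈ Set.Icc (0:ℝ) 1 ∧
        ∃ p : Fin k → ℝ, (∀ i, 0 ≤ p i) ∧ (∑ i, p i = 1) ∧
        ∃ B : Fin k → Matrix (Fin d) (Fin d) ℂ,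
          (∀ i, (B i).PosSemidef) ∧ (∑ i, B i = 1) ∧
          (∀ i, A i = (t : ℂ) • ((p i : ℂ) • (1 : Matrix (Fin d) (Fin d) ℂ))
                        + ((1 - t : ℝ) : ℂ) • B i)}
      = ∑ i, minEig (A i) := by
  have : NeZero d := ⟨hd.ne'⟩
  have : Nonempty (Fin k) :=
    Finset.univ_nonempty_iff.mp (Finset.nonempty_of_sum_ne_zero (hAsum ▸ one_ne_zero))
  have hherm i := (hA i).isHermitian
  change sSup (noiseWeights A) = _
  rw [Set.ext fun t => mem_noiseWeights_iff hherm hAsum]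
  exact (isGreatest_sum_of_exists_stdSimplex_mul_le (fun i => (hA i).minEig_nonneg)
    (sum_minEig_le_one hherm hAsum)).csSup_eq
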